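/- Let 0 < η < 1 and L > 0, and let u = (u_z, u_r, u_θ) : ℝ × [η,1] → ℝ³ be a C¹ vector field, L-periodic in z, satisfying ∂_z(r u_z) + ∂_r(r u_r) = 0 on ℝ × (η,1) and u_r(z, η) = u_r(z, 1) = 0 for all z. Then the weighted mean of the axial convective term vanishes: ∫₀^L ∫_η^1 r·(u_r ∂_r u_z + u_z ∂_z u_z) dr dz = 0. -/

import Mathlib

open MeasureTheory

/-- Partial derivative in the axial variable `z` of a function of `(z, r)`. -/
noncomputable def pdz (f : ℝ → ℝ → ℝ) (z r : ℝ) : ℝ := deriv (fun z' => f z' r) z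

/-- Partial derivative in the radial variable `r` of a function of `(z, r)`. -/
noncomputable def pdr (f : ℝ → ℝ → ℝ) (z r : ℝ) : ℝ := deriv (fun r' => f z r') r

/-! In the interior of the strip the divergence-free condition turns the weighted axial
convective term into a divergence,
`r (u_r ∂_r u_z + u_z ∂_z u_z) = ∂_z (r u_z²) + ∂_r (r u_r u_z)`.
By the divergence theorem on `[0, L] × [η, 1]` its integral is a boundary flux: the radial
flux `r u_r u_z` vanishes on `r = η` and `r = 1` together with `u_r`, and the axial fluxes
`r u_z²` through `z = 0` and `z = L` cancel by periodicity. -/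

open Set Filter Topology
open scoped Interval

section PartialDerivatives

variable {f : ℝ → ℝ → ℝ} {z r : ℝ}

theorem hasDerivAt_pdz (h : DifferentiableAt ℝ (fun q : ℝ × ℝ => f q.1 q.2) (z, r)) :
    HasDerivAt (fun z' => f z' r) (pdz f z r) z :=
  (h.comp (f := fun z' => (z', r)) z
    (differentiableAt_id.prodMk (differentiableAt_const r))).hasDerivAt

theorem hasDerivAt_pdr (h : DifferentiableAt ℝ (fun q : ℝ × ℝ => f q.1 q.2) (z, r)) :
    HasDerivAt (fun r' => f z r') (pdr f z r) r :=
  (h.comp (f := fun r' => (z, r')) r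
    ((differentiableAt_const z).prodMk differentiableAt_id)).hasDerivAt

theorem fderivWithin_apply_one_zero_eq_pdz {F : ℝ × ℝ → ℝ} {s : Set (ℝ × ℝ)}
    (hs : s ∈ 𝓝 (z, r)) (h : DifferentiableAt ℝ F (z, r)) :
    fderivWithin ℝ F s (z, r) (1, 0) = pdz (fun z' r' => F (z', r')) z r := by
  rw [fderivWithin_of_mem_nhds hs]
  exact ((h.hasFDerivAt.comp_hasDerivAt z
    ((hasDerivAt_id z).prodMk (hasDerivAt_const z r))).deriv).symm

theorem fderivWithin_apply_zero_one_eq_pdr {F : ℝ × ℝ → ℝ} {s : Set (ℝ × ℝ)}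
    (hs : s ∈ 𝓝 (z, r)) (h : DifferentiableAt ℝ F (z, r)) :
    fderivWithin ℝ F s (z, r) (0, 1) = pdr (fun z' r' => F (z', r')) z r := by
  rw [fderivWithin_of_mem_nhds hs]
  exact ((h.hasFDerivAt.comp_hasDerivAt r
    ((hasDerivAt_const r z).prodMk (hasDerivAt_id r))).deriv).symm

end PartialDerivatives

theorem convective_eq_pdz_add_pdr {uz ur : ℝ → ℝ → ℝ} {z r : ℝ}
    (huz : DifferentiableAt ℝ (fun q : ℝ × ℝ => uz q.1 q.2) (z, r))
    (hur : DifferentiableAt ℝ (fun q : ℝ × ℝ => ur q.1 q.2) (z, r))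
    (hdiv : pdz (fun z' r' => r' * uz z' r') z r + pdr (fun z' r' => r' * ur z' r') z r = 0) :
    r * (ur z r * pdr uz z r + uz z r * pdz uz z r) =
      pdz (fun z' r' => r' * uz z' r' ^ 2) z r +
        pdr (fun z' r' => r' * ur z' r' * uz z' r') z r := by
  have hz_uz := hasDerivAt_pdz huz
  have hr_rur := (hasDerivAt_id r).mul (hasDerivAt_pdr hur)
  have pdz_ruz : pdz (fun z' r' => r' * uz z' r') z r = r * pdz uz z r :=
    (hz_uz.const_mul r).deriv
  have pdr_rur : pdr (fun z' r' => r' * ur z' r') z r = 1 * ur z r + r * pdr ur z r :=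
    hr_rur.deriv
  have pdz_ruz2 : pdz (fun z' r' => r' * uz z' r' ^ 2) z r =
      r * (2 * uz z r ^ 1 * pdz uz z r) :=
    ((hz_uz.pow 2).const_mul r).deriv
  have pdr_ruruz : pdr (fun z' r' => r' * ur z' r' * uz z' r') z r =
      (1 * ur z r + r * pdr ur z r) * uz z r + r * ur z r * pdr uz z r :=
    (hr_rur.mul (hasDerivAt_pdr huz)).deriv
  rw [pdz_ruz, pdr_rur] at hdiv
  rw [pdz_ruz2, pdr_ruruz]
  linear_combination (-uz z r) * hdiv

theorem integral2_divergence_prod_univ_Icc_of_contDiffOn {E : Type*} [NormedAddCommGroup E]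
    [NormedSpace ℝ E] [CompleteSpace E] {F G : ℝ × ℝ → E} {a b : ℝ} (hab : a < b)
    (hF : ContDiffOn ℝ 1 F (univ ×ˢ Icc a b)) (hG : ContDiffOn ℝ 1 G (univ ×ˢ Icc a b))
    (z₀ z₁ : ℝ) :
    ∫ z in z₀..z₁, ∫ r in a..b,
        fderivWithin ℝ F (univ ×ˢ Icc a b) (z, r) (1, 0) +
          fderivWithin ℝ G (univ ×ˢ Icc a b) (z, r) (0, 1) =
      (((∫ z in z₀..z₁, G (z, b)) - ∫ z in z₀..z₁, G (z, a)) + ∫ r in a..b, F (z₁, r)) -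
        ∫ r in a..b, F (z₀, r) := by
  set s : Set (ℝ × ℝ) := univ ×ˢ Icc a b
  have hs : UniqueDiffOn ℝ s := uniqueDiffOn_univ.prod (uniqueDiffOn_Icc hab)
  have hrect : [[z₀, z₁]] ×ˢ [[a, b]] ⊆ s := by
    rw [uIcc_of_le hab.le]; exact prod_mono (subset_univ _) subset_rfl
  have hderiv {H : ℝ × ℝ → E} (hH : ContDiffOn ℝ 1 H s) :
      ∀ q ∈ Ioo (min z₀ z₁) (max z₀ z₁) ×ˢ Ioo (min a b) (max a b),
        HasFDerivAt H (fderivWithin ℝ H s q) q := by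
    rintro ⟨z, r⟩ ⟨-, hr⟩
    rw [min_eq_left hab.le, max_eq_right hab.le] at hr
    have hnhds : s ∈ 𝓝 (z, r) := prod_mem_nhds univ_mem (Icc_mem_nhds hr.1 hr.2)
    rw [fderivWithin_of_mem_nhds hnhds]
    exact ((hH.differentiableOn one_ne_zero).differentiableAt hnhds).hasFDerivAt
  have hcont {H : ℝ × ℝ → E} (hH : ContDiffOn ℝ 1 H s) (v : ℝ × ℝ) :
      ContinuousOn (fun q => fderivWithin ℝ H s q v) s :=
    (hH.continuousOn_fderivWithin_apply hs le_rfl).comp (continuousOn_id.prodMk continuousOn_const)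
      fun q hq => ⟨hq, mem_univ v⟩
  refine integral2_divergence_prod_of_hasFDerivAt F G _ _ z₀ a z₁ b
    (hF.continuousOn.mono hrect) (hG.continuousOn.mono hrect) (hderiv hF) (hderiv hG) ?_
  exact (((hcont hF (1, 0)).add (hcont hG (0, 1))).mono hrect).integrableOn_compact
    (isCompact_uIcc.prod isCompact_uIcc)

theorem axial_convective_term_mean_zero_general
    (η L : ℝ) (hη1 : η < 1)
    (uz ur uθ : ℝ → ℝ → ℝ)
    (hu : ContDiffOn ℝ 1 (fun q : ℝ × ℝ => (uz q.1 q.2, ur q.1 q.2, uθ q.1 q.2))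
      (Set.univ ×ˢ Set.Icc η 1))
    (hper : ∀ z r : ℝ, uz (z + L) r = uz z r ∧ ur (z + L) r = ur z r ∧
      uθ (z + L) r = uθ z r)
    (hdiv : ∀ z r : ℝ, η < r → r < 1 →
      pdz (fun z' r' => r' * uz z' r') z r + pdr (fun z' r' => r' * ur z' r') z r = 0)
    (hbc : ∀ z : ℝ, ur z η = 0 ∧ ur z 1 = 0) :
    ∫ z in (0:ℝ)..L, ∫ r in η..1,
      r * (ur z r * pdr uz z r + uz z r * pdz uz z r) = 0 := by
  set s : Set (ℝ × ℝ) := univ ×ˢ Icc η 1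
  set F : ℝ × ℝ → ℝ := fun q => q.2 * uz q.1 q.2 ^ 2
  set G : ℝ × ℝ → ℝ := fun q => q.2 * ur q.1 q.2 * uz q.1 q.2
  have huz : ContDiffOn ℝ 1 (fun q : ℝ × ℝ => uz q.1 q.2) s := contDiff_fst.comp_contDiffOn hu
  have hur : ContDiffOn ℝ 1 (fun q : ℝ × ℝ => ur q.1 q.2) s :=
    contDiff_fst.comp_contDiffOn (contDiff_snd.comp_contDiffOn hu)
  have hF : ContDiffOn ℝ 1 F s := contDiffOn_snd.mul (huz.pow 2)
  have hG : ContDiffOn ℝ 1 G s := (contDiffOn_snd.mul hur).mul huz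
  have hflux : ∀ z, ∀ r ∈ Ioo η 1, r * (ur z r * pdr uz z r + uz z r * pdz uz z r) =
      fderivWithin ℝ F s (z, r) (1, 0) + fderivWithin ℝ G s (z, r) (0, 1) := by
    intro z r hr
    have hnhds : s ∈ 𝓝 (z, r) := prod_mem_nhds univ_mem (Icc_mem_nhds hr.1 hr.2)
    have hdiff {H : ℝ × ℝ → ℝ} (hH : ContDiffOn ℝ 1 H s) : DifferentiableAt ℝ H (z, r) :=
      (hH.differentiableOn one_ne_zero).differentiableAt hnhds
    rw [fderivWithin_apply_one_zero_eq_pdz hnhds (hdiff hF),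
      fderivWithin_apply_zero_one_eq_pdr hnhds (hdiff hG)]
    exact convective_eq_pdz_add_pdr (hdiff huz) (hdiff hur) (hdiv z r hr.1 hr.2)
  have hperL (r : ℝ) : uz L r = uz 0 r := by simpa using (hper 0 r).1
  calc _ = ∫ z in (0:ℝ)..L, ∫ r in η..1,
        fderivWithin ℝ F s (z, r) (1, 0) + fderivWithin ℝ G s (z, r) (0, 1) :=
        intervalIntegral.integral_congr fun z _ =>
          intervalIntegral.integral_congr_Ioo_of_le hη1.le (hflux z)
    _ = _ := integral2_divergence_prod_univ_Icc_of_contDiffOn hη1 hF hG 0 L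
    _ = 0 := by simp [F, G, hbc, hperL]

/-- For a `C¹` field `u`, `L`-periodic in `z`, divergence-free in the
weighted sense and with `u_r` vanishing at the walls, the weighted mean of the axial
convective term vanishes:
`∫₀^L ∫_η^1 r (u_r ∂_r u_z + u_z ∂_z u_z) dr dz = 0`. -/
theorem axial_convective_term_mean_zero
    (η L : ℝ) (hη : 0 < η) (hη1 : η < 1) (hL : 0 < L)
    (uz ur uθ : ℝ → ℝ → ℝ)
    (hu : ContDiffOn ℝ 1 (fun q : ℝ × ℝ => (uz q.1 q.2, ur q.1 q.2, uθ q.1 q.2))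
      (Set.univ ×ˢ Set.Icc η 1))
    (hper : ∀ z r : ℝ, uz (z + L) r = uz z r ∧ ur (z + L) r = ur z r ∧
      uθ (z + L) r = uθ z r)
    (hdiv : ∀ z r : ℝ, η < r → r < 1 →
      pdz (fun z' r' => r' * uz z' r') z r + pdr (fun z' r' => r' * ur z' r') z r = 0)
    (hbc : ∀ z : ℝ, ur z η = 0 ∧ ur z 1 = 0) :
    ∫ z in (0:ℝ)..L, ∫ r in η..1,
      r * (ur z r * pdr uz z r + uz z r * pdz uz z r) = 0 :=
  axial_convective_term_mean_zero_general η L hη1 uz ur uθ hu hper hdiv hbc
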